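/- Let S ⊆ ℝ be measurable with 0 < ∫_S exp(−z²/2 + z·t) dz < ∞ for every t ∈ ℝ, and let x^(1), …, x^(n) ∈ ℝ^k. Then the function q(w) = (1/n)·Σ_{i=1}^n log( ∫_S exp(−z²/2 + z·⟨w, x^(i)⟩) dz ) is convex on ℝ^k; consequently, the population log-likelihood ℓ̄(w) = (1/n)·Σ_{i=1}^n E_{y ~ N(⟨w*,x^(i)⟩,1,S)}[ −(1/2)(y − ⟨w,x^(i)⟩)² − log ∫_S exp(−(z − ⟨w,x^(i)⟩)²/2) dz ] is a concave function of w. -/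

import Mathlib

/-!
By Hölder's inequality with exponents `1/a`, `1/b`, the log-partition function
`t ↦ log ∫_S exp (-z²/2 + z t) dz` is convex, hence so is `q`, an average of its compositions
with the linear forms `w ↦ ⟪w, xᵢ⟫`. Expanding the square, each summand of `ℓ̄` equals
`E[-y²/2] + E[y] ⟪w, xᵢ⟫ - log ∫_S exp (-z²/2 + z ⟪w, xᵢ⟫) dz`, because
`∫_S exp (-(z - m)²/2) dz = exp (-m²/2) ∫_S exp (-z²/2 + z m) dz`; so `ℓ̄` is an affine function
minus `q`, and is concave.
-/

open MeasureTheory ProbabilityTheory Real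
open scoped RealInnerProductSpace ENNReal

/-- The survival probability `α(μ; S) = N(μ,1)(S)`. -/
noncomputable def survival (μ : ℝ) (S : Set ℝ) : ℝ :=
  (gaussianReal μ 1 S).toReal

/-- The truncated Gaussian `N(μ,1,S)`, i.e. `N(μ,1)` conditioned on `S`. -/
noncomputable def truncGaussian (μ : ℝ) (S : Set ℝ) : Measure ℝ :=
  (gaussianReal μ 1)[|S]

section LogIntegralExp

variable {α : Type*} [MeasurableSpace α] {μ : Measure α}

lemma MeasureTheory.Integrable.memLp_rpow_one_div {f : α → ℝ} (hf : Integrable f μ)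
    (hf0 : 0 ≤ᵐ[μ] f) {a : ℝ} (ha : 0 < a) :
    MemLp (fun x => f x ^ a) (ENNReal.ofReal (1 / a)) μ := by
  have h := (memLp_one_iff_integrable.2 hf).norm_rpow_div (ENNReal.ofReal a)
  rw [ENNReal.toReal_ofReal ha.le, one_div, ← ENNReal.ofReal_inv_of_pos ha, ← one_div] at h
  refine h.ae_eq ?_
  filter_upwards [hf0] with x hx
  rw [Real.norm_of_nonneg hx]

lemma integral_rpow_mul_rpow_le {f g : α → ℝ} (hf : Integrable f μ) (hg : Integrable g μ)
    (hf0 : 0 ≤ᵐ[μ] f) (hg0 : 0 ≤ᵐ[μ] g) {a b : ℝ} (ha : 0 < a) (hb : 0 < b) (hab : a + b = 1) :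
    ∫ x, f x ^ a * g x ^ b ∂μ ≤ (∫ x, f x ∂μ) ^ a * (∫ x, g x ∂μ) ^ b := by
  have integral_rpow_rpow_one_div : ∀ {h : α → ℝ} {c : ℝ}, 0 ≤ᵐ[μ] h → 0 < c →
      ∫ x, (h x ^ c) ^ (1 / c) ∂μ = ∫ x, h x ∂μ := fun h0 hc =>
    integral_congr_ae <| h0.mono fun x hx => by
      simp only [← Real.rpow_mul hx, mul_one_div_cancel hc.ne', Real.rpow_one]
  have holder := integral_mul_le_Lp_mul_Lq_of_nonneg (Real.holderConjugate_one_div ha hb hab)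
    (hf0.mono fun x hx => Real.rpow_nonneg hx a) (hg0.mono fun x hx => Real.rpow_nonneg hx b)
    (hf.memLp_rpow_one_div hf0 ha) (hg.memLp_rpow_one_div hg0 hb)
  rwa [integral_rpow_rpow_one_div hf0 ha, integral_rpow_rpow_one_div hg0 hb, one_div_one_div,
    one_div_one_div] at holder

lemma convexOn_log_integral_exp_add_mul [NeZero μ] {g X : α → ℝ}
    (hint : ∀ t, Integrable (fun a => exp (g a + X a * t)) μ) :
    ConvexOn ℝ Set.univ (fun t => log (∫ a, exp (g a + X a * t) ∂μ)) := by
  refine convexOn_iff_forall_pos.2 ⟨convex_univ, fun s _ t _ a b ha hb hab => ?_⟩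
  have exp_convex_comb : ∀ x, exp (g x + X x * (a • s + b • t))
      = exp (g x + X x * s) ^ a * exp (g x + X x * t) ^ b := fun x => by
    rw [← exp_mul, ← exp_mul, ← exp_add, smul_eq_mul, smul_eq_mul]
    congr 1
    linear_combination g x * hab.symm
  have holder := integral_rpow_mul_rpow_le (hint s) (hint t)
    (ae_of_all _ fun x => (exp_pos _).le) (ae_of_all _ fun x => (exp_pos _).le) ha hb hab
  simp_rw [← exp_convex_comb] at holder
  have hs := integral_exp_pos (hint s)
  have ht := integral_exp_pos (hint t)
  calc log (∫ x, exp (g x + X x * (a • s + b • t)) ∂μ)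
      ≤ log ((∫ x, exp (g x + X x * s) ∂μ) ^ a * (∫ x, exp (g x + X x * t) ∂μ) ^ b) :=
        log_le_log (integral_exp_pos (hint _)) holder
    _ = a • log (∫ x, exp (g x + X x * s) ∂μ) + b • log (∫ x, exp (g x + X x * t) ∂μ) := by
        rw [log_mul (rpow_pos_of_pos hs a).ne' (rpow_pos_of_pos ht b).ne', log_rpow hs,
          log_rpow ht, smul_eq_mul, smul_eq_mul]

end LogIntegralExp

section InnerProduct

variable {E : Type*} [NormedAddCommGroup E] [InnerProductSpace ℝ E]

lemma ConvexOn.finset_sum {ι : Type*} (t : Finset ι) {s : Set E} (hs : Convex ℝ s)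
    {f : ι → E → ℝ} (hf : ∀ i ∈ t, ConvexOn ℝ s (f i)) :
    ConvexOn ℝ s (fun w => ∑ i ∈ t, f i w) := by
  classical
  induction t using Finset.induction_on with
  | empty => simpa using convexOn_const 0 hs
  | insert j t hj ih =>
    simp only [Finset.sum_insert hj]
    exact (hf j (t.mem_insert_self j)).add (ih fun i hi => hf i (Finset.mem_insert_of_mem hi))

lemma ConvexOn.comp_inner_right {f : ℝ → ℝ} (hf : ConvexOn ℝ Set.univ f) (v : E) :
    ConvexOn ℝ Set.univ (fun w : E => f ⟪w, v⟫) := by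
  have h := hf.comp_linearMap (innerₛₗ ℝ v)
  rw [Set.preimage_univ] at h
  exact h.congr fun w _ => by simp [real_inner_comm]

variable {ι : Type*} [Fintype ι]

lemma convexOn_mul_sum_comp_inner {f : ℝ → ℝ} (hf : ConvexOn ℝ Set.univ f) (x : ι → E)
    {c : ℝ} (hc : 0 ≤ c) :
    ConvexOn ℝ Set.univ (fun w : E => c * ∑ i, f ⟪w, x i⟫) :=
  (ConvexOn.finset_sum _ convex_univ fun i _ => hf.comp_inner_right (x i)).smul hc

lemma concaveOn_mul_sum_affine_sub_comp_inner {f : ℝ → ℝ} (hf : ConvexOn ℝ Set.univ f)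
    (a b : ι → ℝ) (x : ι → E) {c : ℝ} (hc : 0 ≤ c) :
    ConcaveOn ℝ Set.univ (fun w : E => c * ∑ i, (a i + b i * ⟪w, x i⟫ - f ⟪w, x i⟫)) := by
  have haffine : ConcaveOn ℝ Set.univ
      (fun w : E => ⟪∑ i, (c * b i) • x i, w⟫ + c * ∑ i, a i) :=
    ((innerₛₗ ℝ _).concaveOn convex_univ).add_const _
  refine (haffine.sub (convexOn_mul_sum_comp_inner hf x hc)).congr fun w _ => ?_
  simp only [Pi.sub_apply, sum_inner, real_inner_smul_left, Finset.sum_sub_distrib,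
    Finset.sum_add_distrib, ← Finset.mul_sum, real_inner_comm w, mul_assoc]
  ring

end InnerProduct

lemma integral_neg_half_mul_sub_sq_sub {ν : Measure ℝ} [IsProbabilityMeasure ν]
    (hν : MemLp id 2 ν) (m c : ℝ) :
    ∫ y, (-(1 / 2) * (y - m) ^ 2 - c) ∂ν
      = ∫ y, -(1 / 2) * y ^ 2 ∂ν + (∫ y, y ∂ν) * m - (m ^ 2 / 2 + c) := by
  have hsq : Integrable (fun y => -(1 / 2) * y ^ 2) ν := hν.integrable_sq.const_mul _
  have hid : Integrable (fun y => y * m) ν := (hν.integrable one_le_two).mul_const m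
  calc ∫ y, (-(1 / 2) * (y - m) ^ 2 - c) ∂ν
      = ∫ y, (-(1 / 2) * y ^ 2 + y * m - (m ^ 2 / 2 + c)) ∂ν := by congr 1; ext y; ring
    _ = _ := by
      rw [integral_sub (hsq.fun_add hid) (integrable_const _), integral_add hsq hid,
        integral_mul_const, integral_const, probReal_univ, one_smul]

noncomputable def gaussLogPartition (S : Set ℝ) (t : ℝ) : ℝ :=
  log (∫ z in S, exp (-z ^ 2 / 2 + z * t))

section GaussLogPartition

variable {S : Set ℝ}

lemma convexOn_gaussLogPartition (hS : volume S ≠ 0)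
    (hint : ∀ t : ℝ, IntegrableOn (fun z : ℝ => exp (-z ^ 2 / 2 + z * t)) S) :
    ConvexOn ℝ Set.univ (gaussLogPartition S) :=
  haveI : NeZero (volume.restrict S) := ⟨by simpa [Measure.restrict_eq_zero] using hS⟩
  convexOn_log_integral_exp_add_mul (g := fun z => -z ^ 2 / 2) (X := id) hint

lemma log_integral_exp_neg_sub_sq (m : ℝ) (hZ : 0 < ∫ z in S, exp (-z ^ 2 / 2 + z * m)) :
    log (∫ z in S, exp (-(z - m) ^ 2 / 2)) = -m ^ 2 / 2 + gaussLogPartition S m := by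
  have hfactor : ∫ z in S, exp (-(z - m) ^ 2 / 2)
      = exp (-m ^ 2 / 2) * ∫ z in S, exp (-z ^ 2 / 2 + z * m) := by
    rw [← integral_const_mul]
    congr 1 with z
    rw [← exp_add]
    ring_nf
  rw [hfactor, log_mul (exp_pos _).ne' hZ.ne', log_exp, gaussLogPartition]

lemma gaussianReal_ne_zero_of_volume_ne_zero (μ : ℝ) (hS : volume S ≠ 0) :
    gaussianReal μ 1 S ≠ 0 :=
  fun h => hS (gaussianReal_absolutelyContinuous' μ one_ne_zero h)

lemma isProbabilityMeasure_truncGaussian (μ : ℝ) (hS : volume S ≠ 0) :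
    IsProbabilityMeasure (truncGaussian μ S) :=
  cond_isProbabilityMeasure (gaussianReal_ne_zero_of_volume_ne_zero μ hS)

lemma memLp_id_truncGaussian (μ : ℝ) (hS : volume S ≠ 0) : MemLp id 2 (truncGaussian μ S) :=
  ((memLp_id_gaussianReal 2).restrict S).smul_measure
    (ENNReal.inv_ne_top.2 (gaussianReal_ne_zero_of_volume_ne_zero μ hS))

lemma integral_truncGaussian_eq (μ m : ℝ) (hS : volume S ≠ 0)
    (hZ : 0 < ∫ z in S, exp (-z ^ 2 / 2 + z * m)) :
    ∫ y, (-(1 / 2) * (y - m) ^ 2 - log (∫ z in S, exp (-(z - m) ^ 2 / 2))) ∂(truncGaussian μ S)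
      = ∫ y, -(1 / 2) * y ^ 2 ∂(truncGaussian μ S) + (∫ y, y ∂(truncGaussian μ S)) * m
        - gaussLogPartition S m := by
  have := isProbabilityMeasure_truncGaussian μ hS
  rw [integral_neg_half_mul_sub_sq_sub (memLp_id_truncGaussian μ hS),
    log_integral_exp_neg_sub_sq m hZ]
  ring

end GaussLogPartition

theorem stmt7 {k n : ℕ} (S : Set ℝ)
    (hpos : ∀ t : ℝ, 0 < ∫ z in S, Real.exp (-z ^ 2 / 2 + z * t))
    (hint : ∀ t : ℝ, IntegrableOn (fun z : ℝ => Real.exp (-z ^ 2 / 2 + z * t)) S)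
    (x : Fin n → EuclideanSpace ℝ (Fin k)) (wstar : EuclideanSpace ℝ (Fin k)) :
    ConvexOn ℝ Set.univ (fun w : EuclideanSpace ℝ (Fin k) =>
      (1 / n : ℝ) * ∑ i, Real.log (∫ z in S, Real.exp (-z ^ 2 / 2 + z * ⟪w, x i⟫))) ∧
    ConcaveOn ℝ Set.univ (fun w : EuclideanSpace ℝ (Fin k) =>
      (1 / n : ℝ) * ∑ i, ∫ y, (-(1 / 2) * (y - ⟪w, x i⟫) ^ 2 -
          Real.log (∫ z in S, Real.exp (-(z - ⟪w, x i⟫) ^ 2 / 2)))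
        ∂(truncGaussian ⟪wstar, x i⟫ S)) := by
  have hS : volume S ≠ 0 := fun h => (hpos 0).ne' (setIntegral_measure_zero _ h)
  have hconvex := convexOn_gaussLogPartition hS hint
  have hn : (0 : ℝ) ≤ 1 / n := by positivity
  refine ⟨convexOn_mul_sum_comp_inner hconvex x hn, ?_⟩
  refine (concaveOn_mul_sum_affine_sub_comp_inner hconvex
    (fun i => ∫ y, -(1 / 2) * y ^ 2 ∂(truncGaussian ⟪wstar, x i⟫ S))
    (fun i => ∫ y, y ∂(truncGaussian ⟪wstar, x i⟫ S)) x hn).congr fun w _ => ?_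
  simp only [integral_truncGaussian_eq _ _ hS (hpos _)]
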